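/- Let M = {{P₀,P₁},{P₀,P₂},{P₁,P₂}} and N = {{0,P₀},{0,P₁},{0,P₂}}, viewed as two-element subsets of B(T). Then: (a) for every pair {a,b} ∈ M and every pair {c,d} ∈ M ∪ N there is a unary polynomial F of B(T) with {F(a),F(b)} = {c,d}; (b) for every {a,b} ∈ N and {c,d} ∈ N there is a unary polynomial F with {F(a),F(b)} = {c,d}; (c) for every {a,b} ∈ N and {c,d} ∈ M there is no unary polynomial F with {F(a),F(b)} = {c,d}. (M and N are the strongly connected components of the polynomial-image digraph on two-element subsets of {0} ∪ P, with N < M.) -/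
import Mathlib


namespace Paper

/-- Direction of a Turing-machine head move. -/
inductive Dir : Type
  | L | R
deriving DecidableEq

/-- A Turing machine with states μ₀, μ₁, …, μ_k (μ₀ the halting state): for each state
μ_i with 1 ≤ i ≤ k and each tape symbol r, exactly one instruction μ_i r s D μ_m,
recorded as `instr i r = (s, D, m)`.  (The value of `instr` at `i = 0` is irrelevant:
no instruction begins with μ₀.) -/
structure TM (k : ℕ) : Type where
  instr : Fin (k + 1) → Bool → Bool × Dir × Fin (k + 1)

/-- The universe of the algebra B(T):
`zero` = 0, `P j` = P_j, `one`,`two`,`H` the sequential elements U, and the machine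
elements `C b i r s` = C_{ir}^s, `D b i r s` = D_{ir}^s, `M b i r` = M_i^r, where
`b = true` marks the barred copy V̄. -/
inductive BT (k : ℕ) : Type
  | zero : BT k
  | P : Fin 3 → BT k
  | one : BT k
  | two : BT k
  | H : BT k
  | C : Bool → Fin (k + 1) → Bool → Bool → BT k
  | D : Bool → Fin (k + 1) → Bool → Bool → BT k
  | M : Bool → Fin (k + 1) → Bool → BT k
deriving DecidableEq

namespace BT

variable {k : ℕ}

/-- The partial order of B(T): x ≤ y iff x = 0, or x = y, or (x = P₂ and y ∈ {P₀,P₁}). -/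
def le (x y : BT k) : Prop :=
  x = zero ∨ x = y ∨ (x = P 2 ∧ (y = P 0 ∨ y = P 1))

/-- x ∧ y: the greatest lower bound for `le`. -/
def meet (x y : BT k) : BT k :=
  if x = y then x
  else if x = P 2 ∧ (y = P 0 ∨ y = P 1) then P 2
  else if y = P 2 ∧ (x = P 0 ∨ x = P 1) then P 2
  else if (x = P 0 ∨ x = P 1) ∧ (y = P 0 ∨ y = P 1) then P 2
  else zero

/-- membership in P = {P₀,P₁,P₂} -/
def isP : BT k → Bool
  | P _ => true
  | _ => false

/-- membership in U = {1,2,H} -/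
def isU : BT k → Bool
  | one => true
  | two => true
  | H => true
  | _ => false

/-- membership in V ∪ V̄ -/
def isVV : BT k → Bool
  | C _ _ _ _ => true
  | D _ _ _ _ => true
  | M _ _ _ => true
  | _ => false

/-- membership in U ∪ V ∪ V̄ -/
def isUVV (x : BT k) : Bool := isU x || isVV x

/-- membership in V₀ = {C_{0r}^s, D_{0r}^s, M₀^r} (unbarred, state μ₀) -/
def isV0 : BT k → Bool
  | C false i _ _ => i == 0
  | D false i _ _ => i == 0
  | M false i _ => i == 0
  | _ => false

/-- membership in V₁₀⁰ = {C₁₀⁰, M₁⁰, D₁₀⁰} -/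
def isV10 (x : BT k) : Bool :=
  x == C false 1 false false || x == M false 1 false || x == D false 1 false false

/-- the bar involution on V ∪ V̄ (identity elsewhere) -/
def barOp : BT k → BT k
  | C b i r s => C (!b) i r s
  | D b i r s => D (!b) i r s
  | M b i r => M (!b) i r
  | x => x

/-- s₀ = C₁₀⁰, s₁ = M₁⁰, s₂ = D₁₀⁰ -/
def sel : Fin 3 → BT k := ![C false 1 false false, M false 1 false, D false 1 false false]

/-- x ∧ⁱ y = x if x = y ∈ (P ∪ V₁₀⁰) \ {s_i}, else 0. -/
def meetI (i : Fin 3) (x y : BT k) : BT k :=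
  if x = y ∧ (isP x ∨ isV10 x) ∧ x ≠ sel i then x else zero

/-- T₀(x) = P₂ if x ∈ {P₀,P₂}; P₀ if x = P₁; x if x ∈ V₀; else 0. -/
def T0 : BT k → BT k
  | P j => if j = 1 then P 0 else P 2
  | C false i r s => if i = 0 then C false i r s else zero
  | D false i r s => if i = 0 then D false i r s else zero
  | M false i r => if i = 0 then M false i r else zero
  | _ => zero

/-- T₁(x,y). -/
def T1 (x y : BT k) : BT k :=
  if (x = P 0 ∧ y = P 0) ∨ (x = P 0 ∧ y = P 1) ∨ (x = P 1 ∧ y = P 0) ∨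
     (x = P 0 ∧ y = P 2) ∨ (x = P 2 ∧ y = P 0) then P 1
  else if (x = P 1 ∨ x = P 2) ∧ (y = P 1 ∨ y = P 2) then P 2
  else if x = y ∧ isV10 x then x
  else zero

/-- J′(x,y,z) = x ∧ z if x = y or {x,y} ⊆ P; x if x = ȳ ∈ V ∪ V̄; else 0. -/
def J' (x y z : BT k) : BT k :=
  if x = y ∨ (isP x ∧ isP y) then meet x z
  else if isVV y ∧ x = barOp y then x
  else zero

/-- the ternary discriminator: t(x,y,z) = z if x = y, else x. -/
def disc (x y z : BT k) : BT k := if x = y then z else x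

/-- S₁(u,x,y,z). -/
def S1 (u x y z : BT k) : BT k :=
  if (u = one ∨ u = two) ∧ x = y ∧ y = z ∧ isUVV x then x
  else if isP x ∧ isP y ∧ isP z then disc x y z
  else zero

/-- S₂(u,v,x,y,z). -/
def S2 (u v x y z : BT k) : BT k :=
  if isVV v ∧ u = barOp v ∧ x = y ∧ y = z ∧ isVV x then x
  else if isP x ∧ isP y ∧ isP z then disc x y z
  else zero

/-- L_{irt} for the instruction μ_i r s L μ_m (the barred clause is handled by carrying
the bar `b` of the argument through). -/
def Lop (i : Fin (k + 1)) (r s : Bool) (m : Fin (k + 1)) (t : Bool) :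
    BT k → BT k → BT k → BT k := fun x y u =>
  match u with
  | P j => if x = one ∧ y = one then P j else zero
  | C b i' r' s' =>
      if x = one ∧ y = one ∧ i' = i ∧ r' = r then C b m t s'
      else if x = H ∧ y = one ∧ i' = i ∧ r' = r ∧ s' = t then M b m t
      else zero
  | M b i' r' => if x = two ∧ y = H ∧ i' = i ∧ r' = r then D b m t s else zero
  | D b i' r' s' => if x = two ∧ y = two ∧ i' = i ∧ r' = r then D b m t s' else zero
  | _ => zero

/-- R_{irt} for the instruction μ_i r s R μ_m. -/
def Rop (i : Fin (k + 1)) (r s : Bool) (m : Fin (k + 1)) (t : Bool) :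
    BT k → BT k → BT k → BT k := fun x y u =>
  match u with
  | P j => if x = one ∧ y = one then P j else zero
  | C b i' r' s' => if x = one ∧ y = one ∧ i' = i ∧ r' = r then C b m t s' else zero
  | M b i' r' => if x = H ∧ y = one ∧ i' = i ∧ r' = r then C b m t s else zero
  | D b i' r' s' =>
      if x = two ∧ y = H ∧ i' = i ∧ r' = r ∧ s' = t then M b m t
      else if x = two ∧ y = two ∧ i' = i ∧ r' = r then D b m t s'
      else zero
  | _ => zero

end BT

/-- The forward machine operation determined by the unique instruction of T beginning
with μ_i r (for 1 ≤ i ≤ k) and the symbol t. -/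
def fwd {k : ℕ} (T : TM k) (i : Fin (k + 1)) (r t : Bool) :
    BT k → BT k → BT k → BT k :=
  match T.instr i r with
  | (s, Dir.L, m) => BT.Lop i r s m t
  | (s, Dir.R, m) => BT.Rop i r s m t

/-- the reverse of a machine operation: F°(x,y,u) = v when F(x,y,v) = u ≠ 0, else 0. -/
noncomputable def revOp {k : ℕ} (F : BT k → BT k → BT k → BT k) (x y u : BT k) : BT k :=
  haveI := Classical.propDecidable (u ≠ BT.zero ∧ ∃ v, F x y v = u)
  if h : u ≠ BT.zero ∧ ∃ v, F x y v = u then h.2.choose else BT.zero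

/-- The machine operations ℳ: `b = false` gives the forward operation, `b = true` the
reverse operation. -/
noncomputable def mop {k : ℕ} (T : TM k) (i : Fin (k + 1)) (r t : Bool) (b : Bool) :
    BT k → BT k → BT k → BT k :=
  match b with
  | false => fwd T i r t
  | true => revOp (fwd T i r t)

/-- The relation ≺ on U: 2≺2, 2≺H, H≺1, 1≺1. -/
def prec {k : ℕ} : BT k → BT k → Bool
  | BT.two, BT.two => true
  | BT.two, BT.H => true
  | BT.H, BT.one => true
  | BT.one, BT.one => true
  | _, _ => false

/-- U_i¹ built from the machine operation F. -/
def U1op {k : ℕ} (F : BT k → BT k → BT k → BT k) (x y z u : BT k) : BT k :=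
  if prec x y ∧ prec x z ∧ y ≠ z ∧ BT.isVV (F x y u) then BT.barOp (F x y u)
  else if prec x y ∧ y = z then F x y u
  else BT.zero

/-- U_i² built from the machine operation F. -/
def U2op {k : ℕ} (F : BT k → BT k → BT k → BT k) (x y z u : BT k) : BT k :=
  if prec x z ∧ prec y z ∧ x ≠ y ∧ BT.isVV (F y z u) then BT.barOp (F y z u)
  else if x = y ∧ prec y z then F y z u
  else BT.zero

/-- The n-ary polynomials of the algebra B(T): functions obtained by composing the basic
operations (the constant 0, T₀, T₁, ∧, ∧⁰, ∧¹, ∧², J′, S₁, S₂, the forward and reverse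
machine operations, and the U_i¹, U_i²), coordinate projections and constants. -/
inductive PolyB {k : ℕ} (T : TM k) : {n : ℕ} → ((Fin n → BT k) → BT k) → Prop where
  | proj {n : ℕ} (i : Fin n) : PolyB T fun v => v i
  | const {n : ℕ} (c : BT k) : PolyB T fun _ : Fin n → BT k => c
  | t0 {n : ℕ} {p : (Fin n → BT k) → BT k} :
      PolyB T p → PolyB T fun v => BT.T0 (p v)
  | t1 {n : ℕ} {p q : (Fin n → BT k) → BT k} :
      PolyB T p → PolyB T q → PolyB T fun v => BT.T1 (p v) (q v)
  | meet {n : ℕ} {p q : (Fin n → BT k) → BT k} :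
      PolyB T p → PolyB T q → PolyB T fun v => BT.meet (p v) (q v)
  | meetI (j : Fin 3) {n : ℕ} {p q : (Fin n → BT k) → BT k} :
      PolyB T p → PolyB T q → PolyB T fun v => BT.meetI j (p v) (q v)
  | jop {n : ℕ} {p q r : (Fin n → BT k) → BT k} :
      PolyB T p → PolyB T q → PolyB T r → PolyB T fun v => BT.J' (p v) (q v) (r v)
  | s1 {n : ℕ} {p q r s : (Fin n → BT k) → BT k} :
      PolyB T p → PolyB T q → PolyB T r → PolyB T s →
      PolyB T fun v => BT.S1 (p v) (q v) (r v) (s v)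
  | s2 {n : ℕ} {p q r s w : (Fin n → BT k) → BT k} :
      PolyB T p → PolyB T q → PolyB T r → PolyB T s → PolyB T w →
      PolyB T fun v => BT.S2 (p v) (q v) (r v) (s v) (w v)
  | mach (i : Fin (k + 1)) (hi : i ≠ 0) (r t b : Bool) {n : ℕ}
      {p q u : (Fin n → BT k) → BT k} :
      PolyB T p → PolyB T q → PolyB T u →
      PolyB T fun v => mop T i r t b (p v) (q v) (u v)
  | u1 (i : Fin (k + 1)) (hi : i ≠ 0) (r t b : Bool) {n : ℕ}
      {p q r' s : (Fin n → BT k) → BT k} :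
      PolyB T p → PolyB T q → PolyB T r' → PolyB T s →
      PolyB T fun v => U1op (mop T i r t b) (p v) (q v) (r' v) (s v)
  | u2 (i : Fin (k + 1)) (hi : i ≠ 0) (r t b : Bool) {n : ℕ}
      {p q r' s : (Fin n → BT k) → BT k} :
      PolyB T p → PolyB T q → PolyB T r' → PolyB T s →
      PolyB T fun v => U2op (mop T i r t b) (p v) (q v) (r' v) (s v)

/-- unary polynomials of B(T) -/
def UPolyB {k : ℕ} (T : TM k) (F : BT k → BT k) : Prop :=
  PolyB T (n := 1) fun v => F (v 0)

/-- binary polynomials of B(T) -/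
def BPolyB {k : ℕ} (T : TM k) (F : BT k → BT k → BT k) : Prop :=
  PolyB T (n := 2) fun v => F (v 0) (v 1)


/-- {a,b} is one of the pairs in M = {{P₀,P₁},{P₀,P₂},{P₁,P₂}} -/
def pairM {k : ℕ} (a b : BT k) : Prop :=
  ∃ j j' : Fin 3, j ≠ j' ∧ a = BT.P j ∧ b = BT.P j'

/-- {a,b} is one of the pairs in N = {{0,P₀},{0,P₁},{0,P₂}} -/
def pairN {k : ℕ} (a b : BT k) : Prop :=
  ∃ j : Fin 3, (a = BT.zero ∧ b = BT.P j) ∨ (a = BT.P j ∧ b = BT.zero)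

set_option maxRecDepth 8000

variable {k : ℕ}

/-- the invariant relation: equal, or one side is zero. -/
def Inv (a b : BT k) : Prop := a = b ∨ a = BT.zero ∨ b = BT.zero

lemma Inv.symm' {a b : BT k} (h : Inv a b) : Inv b a := by
  rcases h with rfl | rfl | rfl <;> simp [Inv]

-- zero absorption lemmas
lemma meet_zero_left (y : BT k) : BT.meet BT.zero y = BT.zero := by
  unfold BT.meet; split_ifs <;> simp_all

lemma meet_zero_right (x : BT k) : BT.meet x BT.zero = BT.zero := by
  unfold BT.meet; split_ifs <;> simp_all

lemma T1_zero_left (y : BT k) : BT.T1 BT.zero y = BT.zero := by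
  unfold BT.T1; split_ifs <;> simp_all [BT.isV10]

lemma T1_zero_right (x : BT k) : BT.T1 x BT.zero = BT.zero := by
  unfold BT.T1; split_ifs <;> simp_all [BT.isV10]

lemma meetI_zero_left (j : Fin 3) (y : BT k) : BT.meetI j BT.zero y = BT.zero := by
  unfold BT.meetI; split_ifs <;> simp_all [BT.isP, BT.isV10]

lemma meetI_zero_right (j : Fin 3) (x : BT k) : BT.meetI j x BT.zero = BT.zero := by
  unfold BT.meetI; split_ifs <;> simp_all [BT.isP, BT.isV10]

lemma J'_zero_x (y z : BT k) : BT.J' BT.zero y z = BT.zero := by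
  unfold BT.J'; split_ifs with h1 h2
  · exact meet_zero_left z
  · exfalso; rcases h2 with ⟨hv, hb⟩
    cases y <;> simp [BT.isVV] at hv <;> simp [BT.barOp] at hb
  · rfl

lemma J'_zero_y (x z : BT k) : BT.J' x BT.zero z = BT.zero := by
  unfold BT.J'; split_ifs with h1 h2
  · rcases h1 with rfl | ⟨h, h'⟩
    · exact meet_zero_left z
    · simp [BT.isP] at h'
  · simp [BT.isVV] at h2
  · rfl
-- S1 lemmas
lemma S1_zero_x (u y z : BT k) : BT.S1 u BT.zero y z = BT.zero := by
  unfold BT.S1; split_ifs with h1 h2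
  · simp [BT.isUVV, BT.isU, BT.isVV] at h1
  · simp [BT.isP] at h2
  · rfl

lemma S1_zero_y (u x z : BT k) : BT.S1 u x BT.zero z = BT.zero := by
  unfold BT.S1; split_ifs with h1 h2
  · obtain ⟨_, rfl, _, h⟩ := h1; simp [BT.isUVV, BT.isU, BT.isVV] at h
  · simp [BT.isP] at h2
  · rfl

lemma S1_zero_z (u x y : BT k) : BT.S1 u x y BT.zero = BT.zero := by
  unfold BT.S1; split_ifs with h1 h2
  · obtain ⟨_, rfl, rfl, h⟩ := h1; simp [BT.isUVV, BT.isU, BT.isVV] at h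
  · simp [BT.isP] at h2
  · rfl

lemma not_isP_isUVV (x : BT k) : ¬(BT.isP x = true ∧ BT.isUVV x = true) := by
  cases x <;> simp [BT.isP, BT.isUVV, BT.isU, BT.isVV]

lemma invS1u (u u' x y z : BT k) : Inv (BT.S1 u x y z) (BT.S1 u' x y z) := by
  unfold BT.S1; split_ifs <;>
    first
      | exact Or.inl rfl
      | exact Or.inr (Or.inl rfl)
      | exact Or.inr (Or.inr rfl)
      | (exfalso; apply not_isP_isUVV x; constructor <;> tauto)

-- S2 lemmas
lemma S2_zero_x (u v y z : BT k) : BT.S2 u v BT.zero y z = BT.zero := by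
  unfold BT.S2; split_ifs with h1 h2
  · simp [BT.isVV] at h1
  · simp [BT.isP] at h2
  · rfl

lemma S2_zero_y (u v x z : BT k) : BT.S2 u v x BT.zero z = BT.zero := by
  unfold BT.S2; split_ifs with h1 h2
  · obtain ⟨_, _, rfl, _, h⟩ := h1; simp [BT.isVV] at h
  · simp [BT.isP] at h2
  · rfl

lemma S2_zero_z (u v x y : BT k) : BT.S2 u v x y BT.zero = BT.zero := by
  unfold BT.S2; split_ifs with h1 h2
  · obtain ⟨_, _, rfl, rfl, h⟩ := h1; simp [BT.isVV] at h
  · simp [BT.isP] at h2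
  · rfl

lemma not_isP_isVV (x : BT k) : ¬(BT.isP x = true ∧ BT.isVV x = true) := by
  cases x <;> simp [BT.isP, BT.isVV]

lemma invS2uv (u v u' v' x y z : BT k) : Inv (BT.S2 u v x y z) (BT.S2 u' v' x y z) := by
  unfold BT.S2; split_ifs <;>
    first
      | exact Or.inl rfl
      | exact Or.inr (Or.inl rfl)
      | exact Or.inr (Or.inr rfl)
      | (exfalso; apply not_isP_isVV x; constructor <;> tauto)
-- machine operation zero lemmas
lemma Lop_zero_x (i : Fin (k+1)) (r s : Bool) (m : Fin (k+1)) (t : Bool) (y u : BT k) :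
    BT.Lop i r s m t BT.zero y u = BT.zero := by
  cases u <;> simp [BT.Lop]

lemma Lop_zero_y (i : Fin (k+1)) (r s : Bool) (m : Fin (k+1)) (t : Bool) (x u : BT k) :
    BT.Lop i r s m t x BT.zero u = BT.zero := by
  cases u <;> simp [BT.Lop]

lemma Lop_zero_u (i : Fin (k+1)) (r s : Bool) (m : Fin (k+1)) (t : Bool) (x y : BT k) :
    BT.Lop i r s m t x y BT.zero = BT.zero := rfl

lemma Rop_zero_x (i : Fin (k+1)) (r s : Bool) (m : Fin (k+1)) (t : Bool) (y u : BT k) :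
    BT.Rop i r s m t BT.zero y u = BT.zero := by
  cases u <;> simp [BT.Rop]

lemma Rop_zero_y (i : Fin (k+1)) (r s : Bool) (m : Fin (k+1)) (t : Bool) (x u : BT k) :
    BT.Rop i r s m t x BT.zero u = BT.zero := by
  cases u <;> simp [BT.Rop]

lemma Rop_zero_u (i : Fin (k+1)) (r s : Bool) (m : Fin (k+1)) (t : Bool) (x y : BT k) :
    BT.Rop i r s m t x y BT.zero = BT.zero := rfl

lemma fwd_zero_x (T : TM k) (i : Fin (k+1)) (r t : Bool) (y u : BT k) :
    fwd T i r t BT.zero y u = BT.zero := by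
  unfold fwd
  rcases T.instr i r with ⟨s, _ | _, m⟩
  · exact Lop_zero_x i r s m t y u
  · exact Rop_zero_x i r s m t y u

lemma fwd_zero_y (T : TM k) (i : Fin (k+1)) (r t : Bool) (x u : BT k) :
    fwd T i r t x BT.zero u = BT.zero := by
  unfold fwd
  rcases T.instr i r with ⟨s, _ | _, m⟩
  · exact Lop_zero_y i r s m t x u
  · exact Rop_zero_y i r s m t x u

lemma fwd_zero_u (T : TM k) (i : Fin (k+1)) (r t : Bool) (x y : BT k) :
    fwd T i r t x y BT.zero = BT.zero := by
  unfold fwd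
  rcases T.instr i r with ⟨s, _ | _, m⟩
  · exact Lop_zero_u i r s m t x y
  · exact Rop_zero_u i r s m t x y

lemma revOp_eq_zero (F : BT k → BT k → BT k → BT k) (x y u : BT k)
    (h : ¬(u ≠ BT.zero ∧ ∃ v, F x y v = u)) : revOp F x y u = BT.zero := by
  unfold revOp; exact dif_neg h

lemma mop_zero_x (T : TM k) (i : Fin (k+1)) (r t b : Bool) (y u : BT k) :
    mop T i r t b BT.zero y u = BT.zero := by
  cases b
  · exact fwd_zero_x T i r t y u
  · refine revOp_eq_zero _ _ _ _ ?_
    rintro ⟨hu, v, hv⟩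
    rw [fwd_zero_x] at hv; exact hu hv.symm

lemma mop_zero_y (T : TM k) (i : Fin (k+1)) (r t b : Bool) (x u : BT k) :
    mop T i r t b x BT.zero u = BT.zero := by
  cases b
  · exact fwd_zero_y T i r t x u
  · refine revOp_eq_zero _ _ _ _ ?_
    rintro ⟨hu, v, hv⟩
    rw [fwd_zero_y] at hv; exact hu hv.symm

lemma mop_zero_u (T : TM k) (i : Fin (k+1)) (r t b : Bool) (x y : BT k) :
    mop T i r t b x y BT.zero = BT.zero := by
  cases b
  · exact fwd_zero_u T i r t x y
  · refine revOp_eq_zero _ _ _ _ ?_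
    rintro ⟨hu, _⟩
    exact hu rfl

lemma prec_zero_left (y : BT k) : prec BT.zero y = false := by cases y <;> rfl

lemma prec_zero_right (x : BT k) : prec x BT.zero = false := by cases x <;> rfl

lemma isVV_zero : BT.isVV (BT.zero : BT k) = false := rfl

-- U1op / U2op zero lemmas (for F = mop ...)
section Uops
variable (T : TM k) (i : Fin (k+1)) (r t b : Bool)

lemma U1op_zero_x (y z u : BT k) : U1op (mop T i r t b) BT.zero y z u = BT.zero := by
  unfold U1op; split_ifs <;> simp_all [prec_zero_left]

lemma U1op_zero_y (x z u : BT k) : U1op (mop T i r t b) x BT.zero z u = BT.zero := by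
  unfold U1op; split_ifs <;> simp_all [prec_zero_right]

lemma U1op_zero_z (x y u : BT k) : U1op (mop T i r t b) x y BT.zero u = BT.zero := by
  unfold U1op; split_ifs with h1 h2
  · simp [prec_zero_right] at h1
  · obtain ⟨h, rfl⟩ := h2; simp [prec_zero_right] at h
  · rfl

lemma U1op_zero_u (x y z : BT k) : U1op (mop T i r t b) x y z BT.zero = BT.zero := by
  unfold U1op; split_ifs with h1 h2
  · rw [mop_zero_u] at h1; simp [BT.isVV] at h1
  · exact mop_zero_u T i r t b x y
  · rfl

lemma U2op_zero_x (y z u : BT k) : U2op (mop T i r t b) BT.zero y z u = BT.zero := by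
  unfold U2op; split_ifs with h1 h2
  · simp [prec_zero_left] at h1
  · obtain ⟨h, h'⟩ := h2; rw [← h] at h'; simp [prec_zero_left] at h'
  · rfl

lemma U2op_zero_y (x z u : BT k) : U2op (mop T i r t b) x BT.zero z u = BT.zero := by
  unfold U2op; split_ifs <;> simp_all [prec_zero_left]

lemma U2op_zero_z (x y u : BT k) : U2op (mop T i r t b) x y BT.zero u = BT.zero := by
  unfold U2op; split_ifs <;> simp_all [prec_zero_right]

lemma U2op_zero_u (x y z : BT k) : U2op (mop T i r t b) x y z BT.zero = BT.zero := by
  unfold U2op; split_ifs with h1 h2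
  · rw [mop_zero_u] at h1; simp [BT.isVV] at h1
  · exact mop_zero_u T i r t b y z
  · rfl

end Uops
-- generic Inv-closure helpers
lemma inv_app1 (G : BT k → BT k) (h0 : G BT.zero = BT.zero)
    {a a' : BT k} (ha : Inv a a') : Inv (G a) (G a') := by
  rcases ha with rfl | rfl | rfl <;> simp [Inv, h0]

lemma inv_app2 (G : BT k → BT k → BT k)
    (h1 : ∀ y, G BT.zero y = BT.zero) (h2 : ∀ x, G x BT.zero = BT.zero)
    {a a' b b' : BT k} (ha : Inv a a') (hb : Inv b b') : Inv (G a b) (G a' b') := by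
  rcases ha with rfl | rfl | rfl <;> rcases hb with rfl | rfl | rfl <;> simp [Inv, h1, h2]

lemma inv_app3 (G : BT k → BT k → BT k → BT k)
    (h1 : ∀ y z, G BT.zero y z = BT.zero) (h2 : ∀ x z, G x BT.zero z = BT.zero)
    (h3 : ∀ x y, G x y BT.zero = BT.zero)
    {a a' b b' c c' : BT k} (ha : Inv a a') (hb : Inv b b') (hc : Inv c c') :
    Inv (G a b c) (G a' b' c') := by
  rcases ha with rfl | rfl | rfl <;> rcases hb with rfl | rfl | rfl <;>
    rcases hc with rfl | rfl | rfl <;> simp [Inv, h1, h2, h3]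

lemma inv_app4 (G : BT k → BT k → BT k → BT k → BT k)
    (h1 : ∀ y z u, G BT.zero y z u = BT.zero) (h2 : ∀ x z u, G x BT.zero z u = BT.zero)
    (h3 : ∀ x y u, G x y BT.zero u = BT.zero) (h4 : ∀ x y z, G x y z BT.zero = BT.zero)
    {a a' b b' c c' d d' : BT k} (ha : Inv a a') (hb : Inv b b') (hc : Inv c c')
    (hd : Inv d d') : Inv (G a b c d) (G a' b' c' d') := by
  rcases ha with rfl | rfl | rfl <;> rcases hb with rfl | rfl | rfl <;>
    rcases hc with rfl | rfl | rfl <;> rcases hd with rfl | rfl | rfl <;>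
    simp [Inv, h1, h2, h3, h4]

lemma invJz (x y z' : BT k) : Inv (BT.J' x y BT.zero) (BT.J' x y z') := by
  unfold BT.J'; split_ifs
  · rw [meet_zero_right]; exact Or.inr (Or.inl rfl)
  · exact Or.inl rfl
  · exact Or.inl rfl

lemma invJ' {x x' y y' z z' : BT k} (hx : Inv x x') (hy : Inv y y') (hz : Inv z z') :
    Inv (BT.J' x y z) (BT.J' x' y' z') := by
  rcases hx with rfl | rfl | rfl
  · rcases hy with rfl | rfl | rfl
    · rcases hz with rfl | rfl | rfl
      · exact Or.inl rfl
      · exact invJz x y z'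
      · exact (invJz x y z).symm'
    · exact Or.inr (Or.inl (J'_zero_y x z))
    · exact Or.inr (Or.inr (J'_zero_y x z'))
  · exact Or.inr (Or.inl (J'_zero_x y z))
  · exact Or.inr (Or.inr (J'_zero_x y' z'))

lemma invS1 {u u' x x' y y' z z' : BT k} (hu : Inv u u') (hx : Inv x x')
    (hy : Inv y y') (hz : Inv z z') : Inv (BT.S1 u x y z) (BT.S1 u' x' y' z') := by
  rcases hx with rfl | rfl | rfl
  · rcases hy with rfl | rfl | rfl
    · rcases hz with rfl | rfl | rfl
      · exact invS1u u u' x y z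
      · exact Or.inr (Or.inl (S1_zero_z u x y))
      · exact Or.inr (Or.inr (S1_zero_z u' x y))
    · exact Or.inr (Or.inl (S1_zero_y u x z))
    · exact Or.inr (Or.inr (S1_zero_y u' x z'))
  · exact Or.inr (Or.inl (S1_zero_x u y z))
  · exact Or.inr (Or.inr (S1_zero_x u' y' z'))

lemma invS2 {u u' v v' x x' y y' z z' : BT k} (hu : Inv u u') (hv : Inv v v')
    (hx : Inv x x') (hy : Inv y y') (hz : Inv z z') :
    Inv (BT.S2 u v x y z) (BT.S2 u' v' x' y' z') := by
  rcases hx with rfl | rfl | rfl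
  · rcases hy with rfl | rfl | rfl
    · rcases hz with rfl | rfl | rfl
      · exact invS2uv u v u' v' x y z
      · exact Or.inr (Or.inl (S2_zero_z u v x y))
      · exact Or.inr (Or.inr (S2_zero_z u' v' x y))
    · exact Or.inr (Or.inl (S2_zero_y u v x z))
    · exact Or.inr (Or.inr (S2_zero_y u' v' x z'))
  · exact Or.inr (Or.inl (S2_zero_x u v y z))
  · exact Or.inr (Or.inr (S2_zero_x u' v' y' z'))

lemma invT0 {a a' : BT k} (ha : Inv a a') : Inv (BT.T0 a) (BT.T0 a') :=
  inv_app1 BT.T0 rfl ha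

/-- The key invariance lemma: every polynomial of B(T) preserves `Inv` coordinatewise. -/
theorem inv_poly {T : TM k} {n : ℕ} {p : (Fin n → BT k) → BT k} (hp : PolyB T p) :
    ∀ v w : Fin n → BT k, (∀ i, Inv (v i) (w i)) → Inv (p v) (p w) := by
  induction hp with
  | proj i => exact fun v w h => h i
  | const c => exact fun v w h => Or.inl rfl
  | t0 _ ih => exact fun v w h => invT0 (ih v w h)
  | t1 _ _ ih1 ih2 =>
      exact fun v w h => inv_app2 _ T1_zero_left T1_zero_right (ih1 v w h) (ih2 v w h)
  | meet _ _ ih1 ih2 =>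
      exact fun v w h => inv_app2 _ meet_zero_left meet_zero_right (ih1 v w h) (ih2 v w h)
  | meetI j _ _ ih1 ih2 =>
      exact fun v w h =>
        inv_app2 _ (meetI_zero_left j) (meetI_zero_right j) (ih1 v w h) (ih2 v w h)
  | jop _ _ _ ih1 ih2 ih3 =>
      exact fun v w h => invJ' (ih1 v w h) (ih2 v w h) (ih3 v w h)
  | s1 _ _ _ _ ih1 ih2 ih3 ih4 =>
      exact fun v w h => invS1 (ih1 v w h) (ih2 v w h) (ih3 v w h) (ih4 v w h)
  | s2 _ _ _ _ _ ih1 ih2 ih3 ih4 ih5 =>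
      exact fun v w h =>
        invS2 (ih1 v w h) (ih2 v w h) (ih3 v w h) (ih4 v w h) (ih5 v w h)
  | mach i hi r t b _ _ _ ih1 ih2 ih3 =>
      exact fun v w h => inv_app3 _ (mop_zero_x _ _ _ _ _) (mop_zero_y _ _ _ _ _)
        (mop_zero_u _ _ _ _ _) (ih1 v w h) (ih2 v w h) (ih3 v w h)
  | u1 i hi r t b _ _ _ _ ih1 ih2 ih3 ih4 =>
      exact fun v w h => inv_app4 _ (U1op_zero_x _ _ _ _ _) (U1op_zero_y _ _ _ _ _)
        (U1op_zero_z _ _ _ _ _) (U1op_zero_u _ _ _ _ _)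
        (ih1 v w h) (ih2 v w h) (ih3 v w h) (ih4 v w h)
  | u2 i hi r t b _ _ _ _ ih1 ih2 ih3 ih4 =>
      exact fun v w h => inv_app4 _ (U2op_zero_x _ _ _ _ _) (U2op_zero_y _ _ _ _ _)
        (U2op_zero_z _ _ _ _ _) (U2op_zero_u _ _ _ _ _)
        (ih1 v w h) (ih2 v w h) (ih3 v w h) (ih4 v w h)
-- computation lemmas for the constructions
lemma s1P {k : ℕ} (x y z : Fin 3) :
    BT.S1 (BT.zero : BT k) (BT.P x) (BT.P y) (BT.P z) = if x = y then BT.P z else BT.P x := by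
  unfold BT.S1 BT.disc; split_ifs <;> simp_all [BT.isP]

lemma meetIP {k : ℕ} (x y : Fin 3) :
    BT.meetI (0 : Fin 3) (BT.P x : BT k) (BT.P y) = if x = y then BT.P x else BT.zero := by
  unfold BT.meetI; split_ifs <;> simp_all [BT.isP, BT.sel]

lemma mapM (T : TM k) (j j' d0 d1 : Fin 3) (hjj : j ≠ j') (hd : d0 ≠ j') :
    ∃ F : BT k → BT k, UPolyB T F ∧ F (BT.P j) = BT.P d0 ∧ F (BT.P j') = BT.P d1 := by
  refine ⟨fun x => BT.S1 BT.zero (BT.S1 BT.zero x (BT.P j) (BT.P d0)) (BT.P j') (BT.P d1),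
    ?_, ?_, ?_⟩
  · exact PolyB.s1 (PolyB.const _)
      (PolyB.s1 (PolyB.const _) (PolyB.proj 0) (PolyB.const _) (PolyB.const _))
      (PolyB.const _) (PolyB.const _)
  · simp [s1P, hd]
  · simp [s1P, hjj, Ne.symm hjj]

lemma mapMN (T : TM k) (j j' i : Fin 3) (hjj : j ≠ j') :
    ∃ F : BT k → BT k, UPolyB T F ∧ F (BT.P j) = BT.P i ∧ F (BT.P j') = BT.zero := by
  refine ⟨fun x => BT.S1 BT.zero (BT.meetI 0 x (BT.P j)) (BT.P j) (BT.P i), ?_, ?_, ?_⟩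
  · exact PolyB.s1 (PolyB.const _)
      (PolyB.meetI 0 (PolyB.proj 0) (PolyB.const _)) (PolyB.const _) (PolyB.const _)
  · simp [meetIP, s1P]
  · simp [meetIP, Ne.symm hjj, S1_zero_x]

lemma mapN (T : TM k) (j i : Fin 3) :
    ∃ F : BT k → BT k, UPolyB T F ∧ F BT.zero = BT.zero ∧ F (BT.P j) = BT.P i := by
  refine ⟨fun x => BT.S1 BT.zero x (BT.P j) (BT.P i), ?_, ?_, ?_⟩
  · exact PolyB.s1 (PolyB.const _) (PolyB.proj 0) (PolyB.const _) (PolyB.const _)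
  · simp [S1_zero_x]
  · simp [s1P]
/-- M and N are the strongly connected components of the polynomial-image
digraph on the two-element subsets of {0} ∪ P, with N < M:
(a) every pair of M maps onto every pair of M ∪ N by a unary polynomial;
(b) every pair of N maps onto every pair of N;
(c) no pair of N maps onto a pair of M. -/
theorem statement10 {k : ℕ} (hk : 0 < k) (T : TM k) :
    (∀ a b c d : BT k, pairM a b → (pairM c d ∨ pairN c d) →
      ∃ F : BT k → BT k, UPolyB T F ∧ ((F a = c ∧ F b = d) ∨ (F a = d ∧ F b = c))) ∧
    (∀ a b c d : BT k, pairN a b → pairN c d →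
      ∃ F : BT k → BT k, UPolyB T F ∧ ((F a = c ∧ F b = d) ∨ (F a = d ∧ F b = c))) ∧
    (∀ a b c d : BT k, pairN a b → pairM c d →
      ¬ ∃ F : BT k → BT k, UPolyB T F ∧ ((F a = c ∧ F b = d) ∨ (F a = d ∧ F b = c))) := by
  refine ⟨?_, ?_, ?_⟩
  · rintro a b c d ⟨j, j', hjj, rfl, rfl⟩ (⟨i, i', hii, rfl, rfl⟩ | ⟨i, hcd⟩)
    · by_cases hij : i = j'
      · obtain ⟨F, hF, h1, h2⟩ := mapM T j j' i' i hjj (by rw [← hij]; exact Ne.symm hii)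
        exact ⟨F, hF, Or.inr ⟨h1, h2⟩⟩
      · obtain ⟨F, hF, h1, h2⟩ := mapM T j j' i i' hjj hij
        exact ⟨F, hF, Or.inl ⟨h1, h2⟩⟩
    · obtain ⟨F, hF, h1, h2⟩ := mapMN T j j' i hjj
      rcases hcd with ⟨rfl, rfl⟩ | ⟨rfl, rfl⟩
      · exact ⟨F, hF, Or.inr ⟨h1, h2⟩⟩
      · exact ⟨F, hF, Or.inl ⟨h1, h2⟩⟩
  · rintro a b c d ⟨j, hab⟩ ⟨i, hcd⟩
    obtain ⟨F, hF, h0, h1⟩ := mapN T j i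
    rcases hab with ⟨rfl, rfl⟩ | ⟨rfl, rfl⟩ <;> rcases hcd with ⟨rfl, rfl⟩ | ⟨rfl, rfl⟩
    · exact ⟨F, hF, Or.inl ⟨h0, h1⟩⟩
    · exact ⟨F, hF, Or.inr ⟨h0, h1⟩⟩
    · exact ⟨F, hF, Or.inr ⟨h1, h0⟩⟩
    · exact ⟨F, hF, Or.inl ⟨h1, h0⟩⟩
  · rintro a b c d ⟨j, hab⟩ ⟨i, i', hii, rfl, rfl⟩ ⟨F, hF, hcase⟩
    have hinv : Inv a b := by
      rcases hab with ⟨rfl, rfl⟩ | ⟨rfl, rfl⟩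
      · exact Or.inr (Or.inl rfl)
      · exact Or.inr (Or.inr rfl)
    have key : Inv (F a) (F b) :=
      inv_poly hF (fun _ => a) (fun _ => b) (fun _ => hinv)
    rcases hcase with ⟨h1, h2⟩ | ⟨h1, h2⟩ <;> rw [h1, h2] at key <;>
      rcases key with he | he | he <;> simp_all

end Paper
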